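/- arXiv:1710.04573 — 8 statements merged into one kernel-verified Lean document; each statement's English description precedes it below -/
import Mathlib

section
/- Let u>0, s≥0 and ν₀,ν₁≥0 with ν₀+ν₁=1, and assume ν₀>0 or u ≥ s. Let y : [0,∞) → ℝ be differentiable with y(0)=y₀ ∈ [0,1] and y'(t) = −s y(t)(1−y(t)) − u ν₀ y(t) + u ν₁ (1−y(t)) for all t ≥ 0. Then y(t) → ȳ as t → ∞, where ȳ = (1/2)(1 + u/s − √((1−u/s)² + 4ν₀u/s)) if s>0 and ȳ = ν₁ if s=0. -/
/-!
Write `F` for the right-hand side. Just above `1` it satisfies `F x ≤ (2s - u)(x - 1)`, so an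
exponential fence keeps every solution below `1`. For `s = 0` the equation is linear,
`y' = -u (y - ν₁)`. For `s > 0`, `F x = s (x - ȳ)(x - y⁺)`, and `ν₀ > 0` puts the second root
`y⁺` above `1`; then `(y - ȳ)²` decays exponentially on `y ≤ 1`. In the remaining case `ν₀ = 0`,
`s ≤ u` one has `ȳ = 1` and `y' ≥ s (1 - y)²`, so `y` increases and cannot stay below any level
`a < 1`.
-/

open Filter Real Topology

section ScalarODE

variable {y d : ℝ → ℝ}

lemma le_of_deriv_le_mul_sub {c K T : ℝ} (hder : ∀ t, 0 ≤ t → HasDerivAt y (d t) t)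
    (hd : ∀ t, 0 ≤ t → c < y t → y t ≤ c + 1 → d t ≤ K * (y t - c))
    (h0 : y 0 ≤ c) (hT : 0 ≤ T) : y T ≤ c := by
  suffices fence : ∀ δ, 0 < δ → δ ≤ 1 → y T ≤ c + δ from
    le_of_forall_pos_le_add fun ε hε =>
      (fence _ (lt_min hε one_pos) (min_le_right ε 1)).trans (by gcongr; exact min_le_left ε 1)
  intro δ hδ hδ1
  -- `c + δ e^{(|K|+1)(t-T)}` is a strict upper fence on `[0, T]` that ends at `c + δ`.
  let gap : ℝ → ℝ := fun t => δ * exp ((|K| + 1) * (t - T))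
  have hgap : ∀ t, HasDerivAt (fun t => c + gap t) ((|K| + 1) * gap t) t := fun t =>
    ((((hasDerivAt_id t).sub_const T).const_mul (|K| + 1)).exp.const_mul δ
      |>.const_add c).congr_deriv (by simp only [gap, id]; ring)
  have := image_le_of_deriv_right_lt_deriv_boundary (a := 0) (b := T) (B := fun t => c + gap t)
    (fun t ht => (hder t ht.1).continuousAt.continuousWithinAt)
    (fun t ht => (hder t ht.1).hasDerivWithinAt)
    (h0.trans (le_add_of_nonneg_right (by positivity))) hgap ?_ ⟨hT, le_rfl⟩
  · simpa [gap] using this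
  intro t ht hyt
  have hgap_pos : 0 < gap t := by positivity
  have hgap_le : gap t ≤ 1 := (mul_le_of_le_one_right hδ.le <| exp_le_one_iff.2 <|
    mul_nonpos_of_nonneg_of_nonpos (by positivity) (by linarith [ht.2])).trans hδ1
  calc d t ≤ K * (y t - c) := hd t ht.1 (by linarith) (by linarith)
    _ ≤ |K| * gap t := by rw [hyt, add_sub_cancel_left]; gcongr; exact le_abs_self K
    _ < (|K| + 1) * gap t := by linarith

lemma mul_sub_le_sub_of_le_deriv {C a b : ℝ} (hder : ∀ t, 0 ≤ t → HasDerivAt y (d t) t)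
    (hd : ∀ t, 0 ≤ t → C ≤ d t) (ha : 0 ≤ a) (hab : a ≤ b) : C * (b - a) ≤ y b - y a := by
  refine (convex_Ici 0).mul_sub_le_image_sub_of_le_deriv
    (fun t ht => (hder t ht).continuousAt.continuousWithinAt)
    (fun t ht => (hder t (interior_subset ht)).differentiableAt.differentiableWithinAt)
    (fun t ht => ?_) a ha b (ha.trans hab) hab
  rw [(hder t (interior_subset ht)).deriv]
  exact hd t (interior_subset ht)

lemma tendsto_of_sub_mul_deriv_le {c κ : ℝ} (hκ : 0 < κ)
    (hder : ∀ t, 0 ≤ t → HasDerivAt y (d t) t)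
    (hd : ∀ t, 0 ≤ t → (y t - c) * d t ≤ -κ * (y t - c) ^ 2) :
    Tendsto y atTop (𝓝 c) := by
  let V : ℝ → ℝ := fun t => (y t - c) ^ 2
  have hV : ∀ t, 0 ≤ t → HasDerivAt V (2 * ((y t - c) * d t)) t := fun t ht =>
    (((hder t ht).sub_const c).pow 2).congr_deriv (by ring)
  have decay : ∀ t, 0 ≤ t → V t ≤ V 0 * exp (-(2 * κ) * t) := fun t ht => by
    simpa [gronwallBound_ε0] using
      le_gronwallBound_of_liminf_deriv_right_le (K := -(2 * κ)) (ε := 0)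
      (fun s hs => (hV s hs.1).continuousAt.continuousWithinAt)
      (fun s hs _ hr => (hV s hs.1).hasDerivWithinAt.liminf_right_slope_le hr) le_rfl
      (fun s hs => by linarith [hd s hs.1]) t ⟨ht, le_rfl⟩
  have hV0 : Tendsto V atTop (𝓝 0) := by
    refine squeeze_zero' (Eventually.of_forall fun t => sq_nonneg _)
      ((eventually_ge_atTop 0).mono decay) ?_
    simpa using ((tendsto_exp_atBot.comp
      (tendsto_id.const_mul_atTop_of_neg (by linarith : -(2 * κ) < 0))).const_mul (V 0))
  have := hV0.sqrt
  simp only [V, sqrt_sq_eq_abs, sqrt_zero] at this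
  simpa using (tendsto_zero_iff_abs_tendsto_zero _).2 this |>.add_const c

lemma tendsto_of_le_of_mul_sq_le_deriv {c k : ℝ} (hk : 0 < k)
    (hder : ∀ t, 0 ≤ t → HasDerivAt y (d t) t) (hle : ∀ t, 0 ≤ t → y t ≤ c)
    (hd : ∀ t, 0 ≤ t → k * (c - y t) ^ 2 ≤ d t) : Tendsto y atTop (𝓝 c) := by
  have hmono : ∀ a b, 0 ≤ a → a ≤ b → y a ≤ y b := fun a b ha hab => by
    linarith [mul_sub_le_sub_of_le_deriv hder
      (fun t ht => (by positivity : 0 ≤ k * (c - y t) ^ 2).trans (hd t ht)) ha hab]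
  refine tendsto_order.2 ⟨fun a ha => ?_, fun a ha =>
    (eventually_ge_atTop 0).mono fun t ht => (hle t ht).trans_lt ha⟩
  by_cases hpass : ∃ t₀, 0 ≤ t₀ ∧ a < y t₀
  · obtain ⟨t₀, ht₀, hat₀⟩ := hpass
    exact (eventually_ge_atTop t₀).mono fun t ht => hat₀.trans_le (hmono t₀ t ht₀ ht)
  -- Otherwise `y ≤ a < c` forever, so `y` grows at least linearly, which is absurd.
  push Not at hpass
  set C := k * (c - a) ^ 2
  have hC : 0 < C := mul_pos hk (pow_pos (sub_pos.2 ha) 2)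
  set T := (a - y 0 + 1) / C
  have hT : 0 ≤ T := div_nonneg (by linarith [hpass 0 le_rfl]) hC.le
  have hgrowth : C * (T - 0) ≤ y T - y 0 := mul_sub_le_sub_of_le_deriv hder
    (fun t ht => le_trans (by simp only [C]; gcongr; linarith [hpass t ht]) (hd t ht)) le_rfl hT
  rw [sub_zero, mul_div_cancel₀ _ hC.ne'] at hgrowth
  linarith [hpass T hT]

end ScalarODE

def mutationSelectionField (u s ν₀ ν₁ x : ℝ) : ℝ :=
  -s * x * (1 - x) - u * ν₀ * x + u * ν₁ * (1 - x)

section MutationSelection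

variable {u s ν₀ ν₁ x : ℝ}

lemma mutationSelectionField_le_mul_sub_one (hu : 0 ≤ u) (hs : 0 ≤ s) (hν₀ : 0 ≤ ν₀)
    (hν : ν₀ + ν₁ = 1) (hx₁ : 1 < x) (hx₂ : x ≤ 1 + 1) :
    mutationSelectionField u s ν₀ ν₁ x ≤ (2 * s - u) * (x - 1) := by
  have hF : mutationSelectionField u s ν₀ ν₁ x =
      s * (x - 1) ^ 2 + (s - u) * (x - 1) - u * ν₀ := by
    unfold mutationSelectionField; linear_combination (u * (1 - x)) * hν
  rw [hF]
  nlinarith [mul_nonneg (mul_nonneg hs (sub_nonneg.2 hx₁.le)) (by linarith : 0 ≤ 2 - x),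
    mul_nonneg hu hν₀]

lemma mutationSelectionField_eq_mul {r : ℝ} (hs : s ≠ 0) (hν : ν₀ + ν₁ = 1)
    (hr : r ^ 2 = (1 - u / s) ^ 2 + 4 * ν₀ * (u / s)) :
    mutationSelectionField u s ν₀ ν₁ x =
      s * (x - (1 + u / s - r) / 2) * (x - (1 + u / s + r) / 2) := by
  have hq : s * (u / s) = u := mul_div_cancel₀ u hs
  unfold mutationSelectionField
  linear_combination (s / 4) * hr + (x - 1 + ν₀) * hq + (u * (1 - x)) * hν

lemma one_lt_mutationSelection_upper_root (hu : 0 < u) (hs : 0 < s) (hν₀ : 0 < ν₀) :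
    1 < (1 + u / s + √((1 - u / s) ^ 2 + 4 * ν₀ * (u / s))) / 2 := by
  have hgap : 1 - u / s < √((1 - u / s) ^ 2 + 4 * ν₀ * (u / s)) :=
    (le_abs_self _).trans_lt <| by
      rw [← sqrt_sq_eq_abs]
      exact sqrt_lt_sqrt (sq_nonneg _) (by have := div_pos hu hs; nlinarith)
  linarith

lemma mutationSelection_lower_root_eq_one (hs : 0 < s) (hsu : s ≤ u) :
    (1 + u / s - √((1 - u / s) ^ 2 + 4 * 0 * (u / s))) / 2 = 1 := by
  have hq : 1 ≤ u / s := (one_le_div hs).2 hsu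
  rw [mul_zero, zero_mul, add_zero, sqrt_sq_eq_abs, abs_of_nonpos (by linarith)]
  ring

lemma mul_sq_le_mutationSelectionField (hsu : s ≤ u) (hx : x ≤ 1) :
    s * (1 - x) ^ 2 ≤ mutationSelectionField u s 0 1 x := by
  unfold mutationSelectionField
  nlinarith [mul_nonneg (sub_nonneg.2 hx) (sub_nonneg.2 hsu)]

end MutationSelection

theorem mutation_selection_tendsto_equilibrium_general
    (u s ν₀ ν₁ : ℝ) (hu : 0 < u) (hs : 0 ≤ s)
    (hν₀ : 0 ≤ ν₀) (hν : ν₀ + ν₁ = 1)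
    (hcase : 0 < ν₀ ∨ s ≤ u)
    (y : ℝ → ℝ) (y₀ : ℝ) (hy₀ : y₀ ∈ Set.Icc (0 : ℝ) 1) (hinit : y 0 = y₀)
    (hode : ∀ t : ℝ, 0 ≤ t →
      HasDerivAt y (-s * y t * (1 - y t) - u * ν₀ * y t + u * ν₁ * (1 - y t)) t) :
    Tendsto y atTop
      (nhds (if 0 < s then
          (1 + u / s - Real.sqrt ((1 - u / s) ^ 2 + 4 * ν₀ * (u / s))) / 2
        else ν₁)) := by
  have hF : ∀ t, 0 ≤ t → HasDerivAt y (mutationSelectionField u s ν₀ ν₁ (y t)) t := hode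
  have hle : ∀ t, 0 ≤ t → y t ≤ 1 := fun t => le_of_deriv_le_mul_sub hF
    (fun _ _ => mutationSelectionField_le_mul_sub_one hu.le hs hν₀ hν) (hinit ▸ hy₀.2)
  rcases hs.eq_or_lt with rfl | hs
  · rw [if_neg (lt_irrefl 0)]
    refine tendsto_of_sub_mul_deriv_le hu hF fun t _ => le_of_eq ?_
    unfold mutationSelectionField
    linear_combination (-(y t - ν₁) * u * y t) * hν
  rw [if_pos hs]
  rcases hν₀.eq_or_lt with rfl | hν₀
  · obtain rfl : ν₁ = 1 := by linarith
    have hsu := hcase.resolve_left (lt_irrefl 0)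
    rw [mutationSelection_lower_root_eq_one hs hsu]
    exact tendsto_of_le_of_mul_sq_le_deriv hs hF hle fun t ht =>
      mul_sq_le_mutationSelectionField hsu (hle t ht)
  set r := √((1 - u / s) ^ 2 + 4 * ν₀ * (u / s))
  have hr : r ^ 2 = (1 - u / s) ^ 2 + 4 * ν₀ * (u / s) := sq_sqrt (by positivity)
  have hroot : 1 < (1 + u / s + r) / 2 := one_lt_mutationSelection_upper_root hu hs hν₀
  refine tendsto_of_sub_mul_deriv_le (mul_pos hs (sub_pos.2 hroot)) hF fun t ht => ?_
  rw [mutationSelectionField_eq_mul hs.ne' hν hr]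
  nlinarith [mul_nonneg (mul_nonneg hs.le (sq_nonneg (y t - (1 + u / s - r) / 2)))
    (sub_nonneg.2 (hle t ht))]

/-- Global convergence of the mutation-selection equation to the stable equilibrium `ȳ`:
if `ν₀ > 0` or `u ≥ s`, every solution with initial value `y₀ ∈ [0,1]` converges to
`ȳ = (1/2)(1 + u/s - √((1 - u/s)² + 4ν₀u/s))` (for `s > 0`), resp. `ȳ = ν₁` (for `s = 0`). -/
theorem mutation_selection_tendsto_equilibrium
    (u s ν₀ ν₁ : ℝ) (hu : 0 < u) (hs : 0 ≤ s)
    (hν₀ : 0 ≤ ν₀) (hν₁ : 0 ≤ ν₁) (hν : ν₀ + ν₁ = 1)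
    (hcase : 0 < ν₀ ∨ s ≤ u)
    (y : ℝ → ℝ) (y₀ : ℝ) (hy₀ : y₀ ∈ Set.Icc (0 : ℝ) 1) (hinit : y 0 = y₀)
    (hode : ∀ t : ℝ, 0 ≤ t →
      HasDerivAt y (-s * y t * (1 - y t) - u * ν₀ * y t + u * ν₁ * (1 - y t)) t) :
    Tendsto y atTop
      (nhds (if 0 < s then
          (1 + u / s - Real.sqrt ((1 - u / s) ^ 2 + 4 * ν₀ * (u / s))) / 2
        else ν₁)) :=
  mutation_selection_tendsto_equilibrium_general u s ν₀ ν₁ hu hs hν₀ hν hcase y y₀ hy₀ hinit hode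
end

section
/- Let u>0, s>0 with u<s, ν₀=0 and ν₁=1. Let y : [0,∞) → ℝ be differentiable with y(0)=y₀ and y'(t) = −s y(t)(1−y(t)) + u(1−y(t)) for all t ≥ 0. If y₀ ∈ [0,1), then y(t) → u/s as t → ∞; if y₀ = 1, then y(t) = 1 for all t ≥ 0. -/
/-!
With `z = 1 - y` the equation becomes the logistic equation `z' = z ((s - u) - s z)`, which is
also linear in `z` with continuous coefficient `s y - u`. Linearity and Grönwall make `z = 0`
invariant both forwards and backwards in time, so `y = 1` is reached exactly when `y₀ = 1`.
Otherwise `z` never vanishes and `1/z - s/(s - u)` solves `p' = -(s - u) p`, hence decays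
exponentially, giving `z → (s - u)/s`, i.e. `y → u/s`.
-/

open Filter Topology Set Real

theorem eqOn_zero_of_hasDerivAt_eq_mul_self_of_abs_le {c f : ℝ → ℝ} {K a b : ℝ}
    (hK : ∀ t ∈ Icc a b, |c t| ≤ K) (hf : ∀ t ∈ Icc a b, HasDerivAt f (c t * f t) t)
    (ha : f a = 0) : ∀ t ∈ Icc a b, f t = 0 :=
  eq_zero_of_abs_deriv_le_mul_abs_self_of_eq_zero_right
    (fun t ht => (hf t ht).continuousAt.continuousWithinAt)
    (fun t ht => (hf t (Ico_subset_Icc_self ht)).hasDerivWithinAt) ha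
    (fun t ht => by
      rw [Real.norm_eq_abs, Real.norm_eq_abs, abs_mul]
      exact mul_le_mul_of_nonneg_right (hK t (Ico_subset_Icc_self ht)) (abs_nonneg _))

theorem eqOn_zero_of_hasDerivAt_eq_mul_self {c f : ℝ → ℝ} {a b t₀ : ℝ}
    (hc : ContinuousOn c (Icc a b)) (hf : ∀ t ∈ Icc a b, HasDerivAt f (c t * f t) t)
    (ht₀ : t₀ ∈ Icc a b) (hf₀ : f t₀ = 0) : ∀ t ∈ Icc a b, f t = 0 := by
  obtain ⟨K, hK⟩ := isCompact_Icc.exists_bound_of_continuousOn hc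
  intro t ht
  rcases le_total t₀ t with hle | hle
  · exact eqOn_zero_of_hasDerivAt_eq_mul_self_of_abs_le (c := c) (a := t₀) (b := b)
      (fun τ hτ => hK τ ⟨ht₀.1.trans hτ.1, hτ.2⟩)
      (fun τ hτ => hf τ ⟨ht₀.1.trans hτ.1, hτ.2⟩) hf₀ t ⟨hle, ht.2⟩
  · -- reversing time, `τ ↦ f (-τ)` solves `g' = -c(-τ) g` on `[-t₀, -a]`
    have hrev : ∀ τ ∈ Icc (-t₀) (-a),
        HasDerivAt (fun τ => f (-τ)) (-c (-τ) * f (-τ)) τ := fun τ hτ => by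
      have hmem : -τ ∈ Icc a b := ⟨le_neg.mpr hτ.2, (neg_le.mpr hτ.1).trans ht₀.2⟩
      exact ((hf (-τ) hmem).comp τ (hasDerivAt_neg τ)).congr_deriv (by ring)
    simpa using eqOn_zero_of_hasDerivAt_eq_mul_self_of_abs_le
      (fun τ hτ => by
        simpa using hK (-τ) ⟨le_neg.mpr hτ.2, (neg_le.mpr hτ.1).trans ht₀.2⟩)
      hrev (by simpa using hf₀) (-t) ⟨neg_le_neg hle, neg_le_neg ht.1⟩

theorem eq_mul_exp_of_hasDerivAt_eq_mul_self {f : ℝ → ℝ} {k : ℝ}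
    (hf : ∀ t, 0 ≤ t → HasDerivAt f (k * f t) t) {t : ℝ} (ht : 0 ≤ t) :
    f t = f 0 * exp (k * t) := by
  have hg : ∀ τ, 0 ≤ τ → HasDerivAt (fun τ => f τ * exp (-(k * τ))) 0 τ := fun τ hτ => by
    have hexp : HasDerivAt (fun τ => exp (-(k * τ))) (exp (-(k * τ)) * -k) τ := by
      simpa using ((hasDerivAt_id τ).const_mul k).neg.exp
    exact ((hf τ hτ).mul hexp).congr_deriv (by ring)
  have hconst := constant_of_has_deriv_right_zero (a := 0) (b := t)
    (fun τ hτ => (hg τ hτ.1).continuousAt.continuousWithinAt)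
    (fun τ hτ => (hg τ hτ.1).hasDerivWithinAt) t ⟨ht, le_rfl⟩
  rw [mul_zero, neg_zero, exp_zero, mul_one] at hconst
  rw [← hconst, mul_assoc, ← exp_add, neg_add_cancel, exp_zero, mul_one]

theorem tendsto_zero_of_hasDerivAt_eq_mul_self {f : ℝ → ℝ} {k : ℝ} (hk : k < 0)
    (hf : ∀ t, 0 ≤ t → HasDerivAt f (k * f t) t) : Tendsto f atTop (𝓝 0) := by
  have hexp : Tendsto (fun t => f 0 * exp (k * t)) atTop (𝓝 (f 0 * 0)) :=
    (tendsto_exp_atBot.comp (tendsto_id.const_mul_atTop_of_neg hk)).const_mul (f 0)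
  rw [mul_zero] at hexp
  refine hexp.congr' ?_
  filter_upwards [eventually_ge_atTop 0] with t ht
  exact (eq_mul_exp_of_hasDerivAt_eq_mul_self hf ht).symm

theorem tendsto_of_hasDerivAt_logistic {z : ℝ → ℝ} {a b : ℝ} (ha : 0 < a) (hb : b ≠ 0)
    (hz : ∀ t, 0 ≤ t → HasDerivAt z (z t * (a - b * z t)) t)
    (hz₀ : ∀ t, 0 ≤ t → z t ≠ 0) : Tendsto z atTop (𝓝 (a / b)) := by
  have hinv : ∀ t, 0 ≤ t →
      HasDerivAt (fun t => (z t)⁻¹ - b / a) (-a * ((z t)⁻¹ - b / a)) t := fun t ht => by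
    refine (((hz t ht).inv (hz₀ t ht)).sub_const (b / a)).congr_deriv ?_
    field_simp [hz₀ t ht]
  have hlim : Tendsto (fun t => (z t)⁻¹) atTop (𝓝 (b / a)) := by
    simpa using (tendsto_zero_of_hasDerivAt_eq_mul_self (neg_lt_zero.mpr ha) hinv).add_const
      (b / a)
  simpa using hlim.inv₀ (div_ne_zero hb ha.ne')

theorem mutation_selection_unidirectional_convergence_general
    (u s : ℝ) (hs : 0 < s) (hus : u < s)
    (y : ℝ → ℝ) (y₀ : ℝ) (hinit : y 0 = y₀)
    (hode : ∀ t : ℝ, 0 ≤ t →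
      HasDerivAt y (-s * y t * (1 - y t) + u * (1 - y t)) t) :
    (y₀ ∈ Set.Ico (0 : ℝ) 1 → Tendsto y atTop (nhds (u / s))) ∧
    (y₀ = 1 → ∀ t : ℝ, 0 ≤ t → y t = 1) := by
  have hlin : ∀ t, 0 ≤ t → HasDerivAt (fun t => 1 - y t) ((s * y t - u) * (1 - y t)) t :=
    fun t ht => ((hode t ht).const_sub 1).congr_deriv (by ring)
  have hone : ∀ t, 0 ≤ t → (y 0 = 1 ↔ y t = 1) := by
    intro t ht
    have hc : ContinuousOn (fun τ => s * y τ - u) (Icc 0 t) := fun τ hτ =>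
      ((hode τ hτ.1).continuousAt.continuousWithinAt.const_mul s).sub continuousWithinAt_const
    have hzero := fun t₀ =>
      eqOn_zero_of_hasDerivAt_eq_mul_self (t₀ := t₀) hc fun τ hτ => hlin τ hτ.1
    simp only [sub_eq_zero, eq_comm (a := (1 : ℝ))] at hzero
    exact ⟨fun h => hzero 0 (left_mem_Icc.mpr ht) h t (right_mem_Icc.mpr ht),
      fun h => hzero t (right_mem_Icc.mpr ht) h 0 (left_mem_Icc.mpr ht)⟩
  refine ⟨fun hy₀ => ?_, fun hy₀ t ht => (hone t ht).mp (hinit.trans hy₀)⟩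
  have hlogistic : ∀ t, 0 ≤ t →
      HasDerivAt (fun t => 1 - y t) ((1 - y t) * ((s - u) - s * (1 - y t))) t :=
    fun t ht => (hlin t ht).congr_deriv (by ring)
  have hne : ∀ t, 0 ≤ t → 1 - y t ≠ 0 := fun t ht h =>
    hy₀.2.ne (hinit ▸ (hone t ht).mpr (sub_eq_zero.mp h).symm)
  have hlim := (tendsto_of_hasDerivAt_logistic (sub_pos.mpr hus) hs.ne' hlogistic hne).const_sub 1
  have hcapacity : 1 - (s - u) / s = u / s := by field_simp; ring
  simpa only [sub_sub_cancel, hcapacity] using hlim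

/-- For unidirectional mutation (`ν₀ = 0`, `ν₁ = 1`) with `u < s`: solutions of
`y' = -s y (1-y) + u (1-y)` started in `[0,1)` converge to `u/s`, while the solution
started at `1` stays at `1`. -/
theorem mutation_selection_unidirectional_convergence
    (u s : ℝ) (hu : 0 < u) (hs : 0 < s) (hus : u < s)
    (y : ℝ → ℝ) (y₀ : ℝ) (hinit : y 0 = y₀)
    (hode : ∀ t : ℝ, 0 ≤ t →
      HasDerivAt y (-s * y t * (1 - y t) + u * (1 - y t)) t) :
    (y₀ ∈ Set.Ico (0 : ℝ) 1 → Tendsto y atTop (nhds (u / s))) ∧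
    (y₀ = 1 → ∀ t : ℝ, 0 ≤ t → y t = 1) :=
  mutation_selection_unidirectional_convergence_general u s hs hus y y₀ hinit hode
end

section
/- Let u>0, s≥0 and ν₀,ν₁≥0 with ν₀+ν₁=1, and assume u>s or ν₀>0. Define p = (1/2)((u+s)/(uν₁) − √(((u+s)/(uν₁))² − 4s/(uν₁))) if ν₁>0, and p = s/(u+s) if ν₁=0. Suppose (a_n)_{n≥0} is a real sequence with a₀ = 1, a_n → 0 as n → ∞, and (u+s) a_n = s a_{n−1} + u ν₁ a_{n+1} for all n ≥ 1. Then a_n = pⁿ for all n ≥ 0. -/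
/-!
With `m = u ν₁ > 0` the recursion reads `a (n+2) = b a (n+1) - c a n` with `b = (u+s)/m`,
`c = s/m`, whose characteristic roots are `p ≤ q` with `p q = c`, `p + q = b`. Since
`b - c = 1/ν₁ ≥ 1`, the larger root satisfies `q ≥ 1`. The sequence `a (n+1) - p a n` is
geometric with ratio `q` and tends to `0`, so it vanishes identically; hence `a n = pⁿ`.
For `ν₁ = 0` the recursion is already of first order.
-/

open Filter Topology

theorem eq_pow_mul_of_succ_eq_mul {a : ℕ → ℝ} {p : ℝ} (h : ∀ n, a (n + 1) = p * a n) :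
    ∀ n, a n = p ^ n * a 0 := by
  intro n
  induction n with
  | zero => simp
  | succ n ih => rw [h, ih, pow_succ]; ring

theorem succ_eq_mul_of_tendsto_zero {a : ℕ → ℝ} {p q : ℝ} (hq : 1 ≤ q)
    (hrec : ∀ n, a (n + 2) = (p + q) * a (n + 1) - p * q * a n)
    (hlim : Tendsto a atTop (𝓝 0)) :
    ∀ n, a (n + 1) = p * a n := by
  set d : ℕ → ℝ := fun n => a (n + 1) - p * a n with hd
  have hd_geom : ∀ n, d n = q ^ n * d 0 :=
    eq_pow_mul_of_succ_eq_mul fun n => by simp only [hd]; linear_combination hrec n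
  have hd_lim : Tendsto (fun n => |d n|) atTop (𝓝 0) := by
    have := (hlim.comp (tendsto_add_atTop_nat 1)).sub (hlim.const_mul p)
    simpa using this.abs
  have hd0_le : ∀ n, |d 0| ≤ |d n| := fun n => by
    rw [hd_geom n, abs_mul, abs_of_nonneg (by positivity : (0 : ℝ) ≤ q ^ n)]
    exact le_mul_of_one_le_left (abs_nonneg _) (one_le_pow₀ hq)
  have hd0 : d 0 = 0 := abs_nonpos_iff.mp (ge_of_tendsto' hd_lim hd0_le)
  intro n
  have hdn : d n = 0 := by rw [hd_geom n, hd0, mul_zero]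
  exact sub_eq_zero.mp hdn

theorem quadratic_roots_mul {b c : ℝ} (h : 0 ≤ b ^ 2 - 4 * c) :
    (b - √(b ^ 2 - 4 * c)) / 2 * ((b + √(b ^ 2 - 4 * c)) / 2) = c := by
  linear_combination (-1 / 4 : ℝ) * Real.sq_sqrt h

-- The discriminant equals `(b - 2)² + 4 (b - c - 1)`.
theorem sq_le_discrim_of_one_le_sub {b c : ℝ} (h : 1 ≤ b - c) : (b - 2) ^ 2 ≤ b ^ 2 - 4 * c := by
  nlinarith

theorem one_le_quadratic_larger_root {b c : ℝ} (h : 1 ≤ b - c) :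
    1 ≤ (b + √(b ^ 2 - 4 * c)) / 2 := by
  have := (Real.abs_le_sqrt (sq_le_discrim_of_one_le_sub h)).trans' (neg_le_abs (b - 2))
  linarith

theorem eq_pow_of_tendsto_zero_of_one_le_sub {a : ℕ → ℝ} {b c : ℝ} (hbc : 1 ≤ b - c)
    (hrec : ∀ n, a (n + 2) = b * a (n + 1) - c * a n) (ha0 : a 0 = 1)
    (hlim : Tendsto a atTop (𝓝 0)) :
    ∀ n, a n = ((b - √(b ^ 2 - 4 * c)) / 2) ^ n := by
  set p := (b - √(b ^ 2 - 4 * c)) / 2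
  set q := (b + √(b ^ 2 - 4 * c)) / 2
  have hsum : p + q = b := by ring
  have hprod : p * q = c :=
    quadratic_roots_mul ((sq_nonneg _).trans (sq_le_discrim_of_one_le_sub hbc))
  have hstep := succ_eq_mul_of_tendsto_zero (p := p) (one_le_quadratic_larger_root hbc)
    (fun n => by rw [hsum, hprod]; exact hrec n) hlim
  intro n
  rw [eq_pow_mul_of_succ_eq_mul hstep n, ha0, mul_one]

theorem fearnhead_recursion_solution_general
    (u s ν₀ ν₁ p : ℝ) (hu : 0 < u) (hs : 0 ≤ s)
    (hν₀ : 0 ≤ ν₀) (hν₁ : 0 ≤ ν₁) (hν : ν₀ + ν₁ = 1)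
    (hp1 : 0 < ν₁ →
      p = ((u + s) / (u * ν₁)
            - Real.sqrt (((u + s) / (u * ν₁)) ^ 2 - 4 * s / (u * ν₁))) / 2)
    (hp2 : ν₁ = 0 → p = s / (u + s))
    (a : ℕ → ℝ) (ha0 : a 0 = 1) (hlim : Tendsto a atTop (nhds 0))
    (harec : ∀ n : ℕ, 1 ≤ n → (u + s) * a n = s * a (n - 1) + u * ν₁ * a (n + 1)) :
    ∀ n : ℕ, a n = p ^ n := by
  rcases hν₁.eq_or_lt with hν₁0 | hν₁pos
  · have hstep : ∀ n, a (n + 1) = p * a n := fun n => by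
      have := harec (n + 1) n.succ_pos
      rw [hp2 hν₁0.symm, div_mul_eq_mul_div, eq_div_iff (by positivity)]
      simp only [← hν₁0, mul_zero, zero_mul, add_zero, add_tsub_cancel_right] at this
      linarith
    intro n
    rw [eq_pow_mul_of_succ_eq_mul hstep n, ha0, mul_one]
  · have hm : 0 < u * ν₁ := mul_pos hu hν₁pos
    have hbc : 1 ≤ (u + s) / (u * ν₁) - s / (u * ν₁) := by
      rw [← sub_div, add_sub_cancel_right, le_div_iff₀ hm]
      nlinarith
    have hrec : ∀ n, a (n + 2) = (u + s) / (u * ν₁) * a (n + 1) - s / (u * ν₁) * a n :=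
      fun n => by
        have := harec (n + 1) n.succ_pos
        field_simp
        simp only [add_tsub_cancel_right] at this
        linarith
    rw [hp1 hν₁pos, mul_div_assoc]
    exact eq_pow_of_tendsto_zero_of_one_le_sub hbc hrec ha0 hlim

/-- Fearnhead's recursion in the deterministic limit: in the positive recurrent regime
(`u > s` or `ν₀ > 0`), the unique solution of `(u+s) a_n = s a_{n-1} + u ν₁ a_{n+1}` with
`a₀ = 1` and `a_n → 0` is `a_n = pⁿ`, with `p` the geometric parameter. -/
theorem fearnhead_recursion_solution
    (u s ν₀ ν₁ p : ℝ) (hu : 0 < u) (hs : 0 ≤ s)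
    (hν₀ : 0 ≤ ν₀) (hν₁ : 0 ≤ ν₁) (hν : ν₀ + ν₁ = 1)
    (hrec : s < u ∨ 0 < ν₀)
    (hp1 : 0 < ν₁ →
      p = ((u + s) / (u * ν₁)
            - Real.sqrt (((u + s) / (u * ν₁)) ^ 2 - 4 * s / (u * ν₁))) / 2)
    (hp2 : ν₁ = 0 → p = s / (u + s))
    (a : ℕ → ℝ) (ha0 : a 0 = 1) (hlim : Tendsto a atTop (nhds 0))
    (harec : ∀ n : ℕ, 1 ≤ n → (u + s) * a n = s * a (n - 1) + u * ν₁ * a (n + 1)) :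
    ∀ n : ℕ, a n = p ^ n :=
  fearnhead_recursion_solution_general u s ν₀ ν₁ p hu hs hν₀ hν₁ hν hp1 hp2 a ha0 hlim harec
end

section
/- Let u>0, s≥0 and ν₀,ν₁≥0 with ν₀+ν₁=1 and ν₁>0. Then (1/2)(1 + (uν₀+s)/(uν₁) − √((1 − (uν₀+s)/(uν₁))² + 4ν₀/ν₁)) = (1/2)((u+s)/(uν₁) − √(((u+s)/(uν₁))² − 4s/(uν₁))). (This identity says that the stable equilibrium formula with the roles of the selection rate s and the deleterious mutation rate uν₁ interchanged equals the geometric parameter p, expressing the tail probabilities a_n of the pruned lookdown ASG as absorption probabilities of the Siegmund-dual process.) -/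
/-- The stable equilibrium formula with the roles of the selection rate `s` and the
deleterious mutation rate `uν₁` interchanged equals the geometric parameter `p` of the
pruned lookdown ASG. -/
theorem interchanged_equilibrium_eq_geometric_parameter
    (u s ν₀ ν₁ : ℝ) (hu : 0 < u) (hs : 0 ≤ s)
    (hν₀ : 0 ≤ ν₀) (hν₁ : 0 ≤ ν₁) (hν : ν₀ + ν₁ = 1) (hν₁pos : 0 < ν₁) :
    (1 + (u * ν₀ + s) / (u * ν₁)
      - Real.sqrt ((1 - (u * ν₀ + s) / (u * ν₁)) ^ 2 + 4 * ν₀ / ν₁)) / 2 =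
    ((u + s) / (u * ν₁)
      - Real.sqrt (((u + s) / (u * ν₁)) ^ 2 - 4 * s / (u * ν₁))) / 2 := by
  have h0 : ν₀ = 1 - ν₁ := by linarith
  subst h0
  have hne : u * ν₁ ≠ 0 := by positivity
  have h1 : 1 + (u * (1 - ν₁) + s) / (u * ν₁) = (u + s) / (u * ν₁) := by
    field_simp; ring
  have h2 : (1 - (u * (1 - ν₁) + s) / (u * ν₁)) ^ 2 + 4 * (1 - ν₁) / ν₁
      = ((u + s) / (u * ν₁)) ^ 2 - 4 * s / (u * ν₁) := by
    field_simp; ring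
  rw [h1, h2]
end

section
/- Let u>0, s≥0 and ν₀,ν₁≥0 with ν₀+ν₁=1, and assume u>s or ν₀>0. Let p ∈ [0,1) satisfy u ν₁ p² − (u+s) p + s = 0 if ν₁>0 (p the smaller root), and p = s/(u+s) if ν₁=0. Define π_n = (1−p) p^{n−1} for n ≥ 1. Then for every m ≥ 1 the stationary balance equation holds: π_m·(m s + (m−1) u) = (m−1) s π_{m−1}·𝟙_{m≥2} + (m u ν₁ + u ν₀) π_{m+1} + u ν₀ · Σ_{n=m+2}^∞ π_n. In particular, the geometric distribution with parameter 1−p is invariant for the transition rates q_L(n,n+1)=ns, q_L(n,n−1)=(n−1)uν₁+𝟙_{n>1}uν₀, q_L(n,n−ℓ)=uν₀ for 2≤ℓ<n. -/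
/-!
The geometric weights `π_n = (1 - p) p^(n-1)` have tails `∑_{n > m} π_n = p^m`, so both sides of
the balance equation at `m` are explicit polynomials in `p`. Using `ν₀ = 1 - ν₁`, their difference
is `(p^(m-1) - (m-1)(1-p) p^(m-2))` times `u ν₁ p² - (u+s) p + s`, which vanishes by the choice
of `p` (for `ν₁ = 0` the quadratic degenerates to the linear equation solved by `s / (u + s)`).
-/

theorem tsum_one_sub_mul_pow_add {p : ℝ} (hp : |p| < 1) (n : ℕ) :
    ∑' k : ℕ, (1 - p) * p ^ (n + k) = p ^ n := by
  have hp1 : 1 - p ≠ 0 := by linarith [le_abs_self p]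
  simp_rw [pow_add, ← mul_assoc]
  rw [tsum_mul_left, tsum_geometric_of_abs_lt_one hp]
  field_simp

theorem geometric_balance_eq_add_mul_quadratic (u s ν₀ ν₁ p : ℝ) (hν : ν₀ + ν₁ = 1)
    {m : ℕ} (hm : 1 ≤ m) :
    (1 - p) * p ^ (m - 1) * ((m : ℝ) * s + ((m : ℝ) - 1) * u) =
      (if 2 ≤ m then ((m : ℝ) - 1) * s * ((1 - p) * p ^ (m - 2)) else 0)
      + ((m : ℝ) * u * ν₁ + u * ν₀) * ((1 - p) * p ^ m)
      + u * ν₀ * p ^ (m + 1)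
      + (p ^ (m - 1) - ((m : ℝ) - 1) * (1 - p) * p ^ (m - 2))
        * (u * ν₁ * p ^ 2 - (u + s) * p + s) := by
  obtain ⟨k, rfl⟩ : ∃ k, m = k + 1 := ⟨m - 1, by omega⟩
  rcases k with _ | k
  · rw [if_neg (by omega)]
    push_cast
    linear_combination -u * p * hν
  · rw [if_pos (by omega), show k + 1 + 1 - 1 = k + 1 from rfl, show k + 1 + 1 - 2 = k from rfl]
    push_cast
    linear_combination -u * p ^ 2 * p ^ k * hν

theorem geometric_stationary_balance_general
    (u s ν₀ ν₁ p : ℝ) (hu : 0 < u) (hs : 0 ≤ s)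
    (hν₁ : 0 ≤ ν₁) (hν : ν₀ + ν₁ = 1)
    (hp : p ∈ Set.Ico (0 : ℝ) 1)
    (hp1 : 0 < ν₁ →
      (u * ν₁ * p ^ 2 - (u + s) * p + s = 0 ∧
       ∀ x : ℝ, u * ν₁ * x ^ 2 - (u + s) * x + s = 0 → p ≤ x))
    (hp2 : ν₁ = 0 → p = s / (u + s)) :
    ∀ m : ℕ, 1 ≤ m →
      (1 - p) * p ^ (m - 1) * ((m : ℝ) * s + ((m : ℝ) - 1) * u) =
        (if 2 ≤ m then ((m : ℝ) - 1) * s * ((1 - p) * p ^ (m - 2)) else 0)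
        + ((m : ℝ) * u * ν₁ + u * ν₀) * ((1 - p) * p ^ m)
        + u * ν₀ * ∑' k : ℕ, (1 - p) * p ^ (m + 1 + k) := by
  have hroot : u * ν₁ * p ^ 2 - (u + s) * p + s = 0 := by
    rcases hν₁.eq_or_lt with h | h
    · have hus : u + s ≠ 0 := by positivity
      rw [hp2 h.symm, ← h]
      field_simp
      ring
    · exact (hp1 h).1
  have hp_abs : |p| < 1 := abs_lt.2 ⟨by linarith [hp.1], hp.2⟩
  intro m hm
  rw [tsum_one_sub_mul_pow_add hp_abs, geometric_balance_eq_add_mul_quadratic u s ν₀ ν₁ p hν hm,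
    hroot, mul_zero, add_zero]

/-- The geometric distribution `π_n = (1-p) p^{n-1}` on `ℕ = {1,2,...}` satisfies the
stationary balance equations for the line-counting process of the pruned lookdown ASG
(rates `q(n,n+1) = ns`, `q(n,n-1) = (n-1)uν₁ + 𝟙_{n>1}uν₀`, `q(n,n-ℓ) = uν₀` for
`2 ≤ ℓ < n`); the total jump rate from `m` is `ms + (m-1)u`. -/
theorem geometric_stationary_balance
    (u s ν₀ ν₁ p : ℝ) (hu : 0 < u) (hs : 0 ≤ s)
    (hν₀ : 0 ≤ ν₀) (hν₁ : 0 ≤ ν₁) (hν : ν₀ + ν₁ = 1)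
    (hrec : s < u ∨ 0 < ν₀)
    (hp : p ∈ Set.Ico (0 : ℝ) 1)
    (hp1 : 0 < ν₁ →
      (u * ν₁ * p ^ 2 - (u + s) * p + s = 0 ∧
       ∀ x : ℝ, u * ν₁ * x ^ 2 - (u + s) * x + s = 0 → p ≤ x))
    (hp2 : ν₁ = 0 → p = s / (u + s)) :
    ∀ m : ℕ, 1 ≤ m →
      (1 - p) * p ^ (m - 1) * ((m : ℝ) * s + ((m : ℝ) - 1) * u) =
        (if 2 ≤ m then ((m : ℝ) - 1) * s * ((1 - p) * p ^ (m - 2)) else 0)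
        + ((m : ℝ) * u * ν₁ + u * ν₀) * ((1 - p) * p ^ m)
        + u * ν₀ * ∑' k : ℕ, (1 - p) * p ^ (m + 1 + k) :=
  geometric_stationary_balance_general u s ν₀ ν₁ p hu hs hν₁ hν hp hp1 hp2
end

section
/- Let u>0, s≥0 and ν₀,ν₁≥0 with ν₀+ν₁=1. Then for all integers n ≥ 1 and m ≥ 1, with 𝟙 denoting indicator functions: n s (𝟙_{m≤n+1} − 𝟙_{m≤n}) + ((n−1) u ν₁ + 𝟙_{n>1} u ν₀)(𝟙_{m≤n−1} − 𝟙_{m≤n}) + u ν₀ Σ_{i=1}^{n−2} (𝟙_{m≤i} − 𝟙_{m≤n}) = (m−1) s (𝟙_{m−1≤n} − 𝟙_{m≤n}) + (m−1) u ν₁ (𝟙_{m+1≤n} − 𝟙_{m≤n}) + (m−1) u ν₀ (0 − 𝟙_{m≤n}). (This is the generator identity A_L H̄(·,m)(n) = A_D H̄(n,·)(m) with H̄(n,m)=𝟙_{m≤n}, establishing the Siegmund duality between the pruned lookdown ASG line-counting process L and the process D.) -/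
lemma sum_indicator_Icc (N m : ℕ) (hm : 1 ≤ m) :
    ∑ i ∈ Finset.Icc 1 N, (if m ≤ i then (1:ℝ) else 0) = ((N + 1 - m : ℕ) : ℝ) := by
  induction N with
  | zero => simp [Nat.sub_eq_zero_of_le hm]
  | succ N ih =>
    rw [Finset.sum_Icc_succ_top (by omega : 1 ≤ N + 1), ih]
    by_cases h : m ≤ N + 1
    · simp only [h, if_pos]
      rw [Nat.cast_sub (by omega), Nat.cast_sub (by omega)]
      push_cast; ring
    · rw [if_neg h, Nat.sub_eq_zero_of_le (by omega), Nat.sub_eq_zero_of_le (by omega)]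
      simp

/-- Generator identity `A_L H̄(·,m)(n) = A_D H̄(n,·)(m)` for the Siegmund duality between
the pruned lookdown ASG line-counting process `L` and the process `D`, with duality
function `H̄(n,m) = 𝟙_{m ≤ n}` (value `0` at `m = Δ`). -/
theorem siegmund_duality_generator_identity
    (u s ν₀ ν₁ : ℝ) (hu : 0 < u) (hs : 0 ≤ s)
    (hν₀ : 0 ≤ ν₀) (hν₁ : 0 ≤ ν₁) (hν : ν₀ + ν₁ = 1) :
    ∀ n m : ℕ, 1 ≤ n → 1 ≤ m →
      (n : ℝ) * s * ((if m ≤ n + 1 then (1 : ℝ) else 0) - (if m ≤ n then 1 else 0))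
      + (((n : ℝ) - 1) * u * ν₁ + (if 1 < n then u * ν₀ else 0))
          * ((if m ≤ n - 1 then (1 : ℝ) else 0) - (if m ≤ n then 1 else 0))
      + u * ν₀ * ∑ i ∈ Finset.Icc 1 (n - 2),
          ((if m ≤ i then (1 : ℝ) else 0) - (if m ≤ n then 1 else 0))
      =
      ((m : ℝ) - 1) * s * ((if m - 1 ≤ n then (1 : ℝ) else 0) - (if m ≤ n then 1 else 0))
      + ((m : ℝ) - 1) * u * ν₁
          * ((if m + 1 ≤ n then (1 : ℝ) else 0) - (if m ≤ n then 1 else 0))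
      + ((m : ℝ) - 1) * u * ν₀ * (0 - (if m ≤ n then (1 : ℝ) else 0)) := by
  intro n m hn hm
  rw [Finset.sum_sub_distrib, sum_indicator_Icc _ m hm, Finset.sum_const, Nat.card_Icc]
  rcases lt_trichotomy m n with h | h | h
  · -- m + 1 ≤ n
    have e1 : m ≤ n + 1 := by omega
    have e2 : m ≤ n := by omega
    have e3 : m ≤ n - 1 := by omega
    have e4 : 1 < n := by omega
    have e5 : m - 1 ≤ n := by omega
    have e6 : m + 1 ≤ n := by omega
    simp only [e1, e2, e3, e4, e5, e6, if_pos]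
    have c1 : n - 2 + 1 - m = n - 1 - m := by omega
    have c2 : n - 2 + 1 - 1 = n - 2 := by omega
    rw [c1, c2, nsmul_eq_mul, Nat.cast_sub (by omega : m ≤ n - 1),
      Nat.cast_sub (by omega : 1 ≤ n), Nat.cast_sub (by omega : 2 ≤ n)]
    push_cast; ring
  · -- m = n
    subst h
    have e1 : m ≤ m + 1 := by omega
    have e2 : m ≤ m := le_refl m
    have e3 : ¬ m ≤ m - 1 := by omega
    have e5 : m - 1 ≤ m := by omega
    have e6 : ¬ m + 1 ≤ m := by omega
    simp only [e1, e2, e3, e5, e6, if_pos, if_neg, not_false_iff]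
    by_cases h4 : 1 < m
    · rw [if_pos h4]
      have c0 : m - 2 + 1 - m = 0 := by omega
      have c2 : m - 2 + 1 - 1 = m - 2 := by omega
      rw [c0, c2, nsmul_eq_mul, Nat.cast_sub (by omega : 2 ≤ m)]
      push_cast; ring
    · have hm1 : m = 1 := by omega
      subst hm1
      norm_num
  · -- n < m
    have e2 : ¬ m ≤ n := by omega
    have e3 : ¬ m ≤ n - 1 := by omega
    have e6 : ¬ m + 1 ≤ n := by omega
    have e7 : n - 2 + 1 - m = 0 := by omega
    rw [if_neg e2, if_neg e3, if_neg e6, e7, smul_zero]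
    by_cases h1 : m = n + 1
    · subst h1
      have e1 : n + 1 ≤ n + 1 := le_refl _
      have e5 : n + 1 - 1 ≤ n := by omega
      rw [if_pos e1, if_pos e5]
      push_cast; ring
    · have e1 : ¬ m ≤ n + 1 := by omega
      have e5 : ¬ m - 1 ≤ n := by omega
      rw [if_neg e1, if_neg e5]
      push_cast; ring
end

section
/- Let u>0, s≥0 and ν₀,ν₁≥0 with ν₀+ν₁=1. Then for all y ∈ (0,1) and all integers n ≥ 1: (−s y(1−y) − u ν₀ y + u ν₁ (1−y)) · n y^{n−1} + (u ν₀ y/(1−y)) (1 − yⁿ) + (u ν₁ (1−y)/y)(0 − yⁿ) = n s (y^{n+1} − yⁿ) + (n−1) u ν₁ (y^{n−1} − yⁿ) + u ν₀ Σ_{k=1}^{n−1} (y^k − yⁿ). (This is the generator identity A_{Ỹ} H(·,n)(y) = A_L H(y,·)(n) underlying the duality between the piecewise-deterministic Markov process Ỹ and the pruned lookdown ASG line-counting process L.) -/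
/-- Generator identity `A_Ỹ H(·,n)(y) = A_L H(y,·)(n)` underlying the duality between the
piecewise-deterministic Markov process `Ỹ` and the line-counting process `L` of the
pruned lookdown ASG, for the duality function `H(y,n) = yⁿ`. -/
theorem pdmp_pld_asg_generator_identity
    (u s ν₀ ν₁ : ℝ) (hu : 0 < u) (hs : 0 ≤ s)
    (hν₀ : 0 ≤ ν₀) (hν₁ : 0 ≤ ν₁) (hν : ν₀ + ν₁ = 1) :
    ∀ y : ℝ, y ∈ Set.Ioo (0 : ℝ) 1 → ∀ n : ℕ, 1 ≤ n →
      (-s * y * (1 - y) - u * ν₀ * y + u * ν₁ * (1 - y)) * ((n : ℝ) * y ^ (n - 1))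
      + u * ν₀ * y / (1 - y) * (1 - y ^ n)
      + u * ν₁ * (1 - y) / y * (0 - y ^ n)
      =
      (n : ℝ) * s * (y ^ (n + 1) - y ^ n)
      + ((n : ℝ) - 1) * u * ν₁ * (y ^ (n - 1) - y ^ n)
      + u * ν₀ * ∑ k ∈ Finset.Icc 1 (n - 1), (y ^ k - y ^ n) := by
  rintro y ⟨hy0, hy1⟩ n hn
  obtain ⟨m, rfl⟩ := Nat.exists_eq_add_of_le hn
  have hy0' : y ≠ 0 := ne_of_gt hy0
  have hy1' : (1 : ℝ) - y ≠ 0 := by linarith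
  have hsum : ∑ k ∈ Finset.Icc 1 ((1 + m) - 1), (y ^ k - y ^ (1 + m))
      = (y - y ^ (1 + m)) / (1 - y) - m * y ^ (1 + m) := by
    simp only [Nat.add_sub_cancel_left]
    rw [Finset.sum_sub_distrib, Finset.sum_const, Nat.card_Icc]
    have : ∑ k ∈ Finset.Icc 1 m, y ^ k = (y - y ^ (1 + m)) / (1 - y) := by
      have h := geom_sum_eq (x := y) (by intro h; exact hy1' (by rw [h]; ring)) m
      have : ∑ k ∈ Finset.Icc 1 m, y ^ k = y * ∑ k ∈ Finset.range m, y ^ k := by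
        rw [Finset.mul_sum]
        rw [show Finset.Icc 1 m = Finset.Ico 1 (m + 1) by rfl,
          Finset.sum_Ico_eq_sum_range]
        exact Finset.sum_congr rfl fun k _ => by ring
      rw [this, h, eq_div_iff hy1']
      have hy1'' : y - 1 ≠ 0 := fun h' => hy1' (by linarith [sub_eq_zero.mp h'])
      field_simp
      ring
    rw [this]
    simp
  rw [hsum]
  push_cast
  have hm1 : (1 : ℕ) + m - 1 = m := Nat.add_sub_cancel_left 1 m
  rw [hm1]
  field_simp
  ring
end

section
/- Let u>0, s>0 and y₀ ∈ (0,1). For ν₀ ∈ [0,1] set ν₁ = 1−ν₀ and define p(ν₀) = (1/2)((u+s)/(uν₁) − √(((u+s)/(uν₁))² − 4s/(uν₁))) if ν₁>0, and p(ν₀) = s/(u+s) if ν₁=0; define G(ν₀) = (1−p(ν₀)) y₀ / (1 − p(ν₀) y₀). Then G is strictly increasing on [0,1]: for all 0 ≤ ν₀ < ν̄₀ ≤ 1 one has G(ν₀) < G(ν̄₀). (Equivalently, the asymptotic probability of an unfit representative ancestral type is strictly increasing in the beneficial mutation probability ν₀.) -/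
/-- The geometric parameter `p(ν₀)` of the pruned lookdown ASG, as a function of the
beneficial mutation probability `ν₀` (with `ν₁ = 1 - ν₀`). -/
noncomputable def pParam (u s ν₀ : ℝ) : ℝ :=
  if 0 < 1 - ν₀ then
    ((u + s) / (u * (1 - ν₀))
      - Real.sqrt (((u + s) / (u * (1 - ν₀))) ^ 2 - 4 * s / (u * (1 - ν₀)))) / 2
  else s / (u + s)

/-- The asymptotic probability `g_∞(y₀, ν₀) = (1 - p(ν₀)) y₀ / (1 - p(ν₀) y₀)` of an
unfit representative ancestral type. -/
noncomputable def Gfun (u s y₀ ν₀ : ℝ) : ℝ :=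
  (1 - pParam u s ν₀) * y₀ / (1 - pParam u s ν₀ * y₀)

/-- Rationalized closed form of `pParam` on `[0,1]`. -/
lemma pParam_eq (u s ν₀ : ℝ) (hu : 0 < u) (hs : 0 < s) (h0 : 0 ≤ ν₀) (h1 : ν₀ ≤ 1) :
    pParam u s ν₀ = 2 * s / ((u + s) + Real.sqrt ((u + s) ^ 2 - 4 * s * (u * (1 - ν₀)))) := by
  unfold pParam
  rcases lt_or_ge 0 (1 - ν₀) with h | h
  · rw [if_pos h]
    set a := u * (1 - ν₀) with ha
    have haP : 0 < a := mul_pos hu h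
    have hDge : (u - s) ^ 2 ≤ (u + s) ^ 2 - 4 * s * a := by
      have : a ≤ u := by nlinarith
      nlinarith
    have hDnn : 0 ≤ (u + s) ^ 2 - 4 * s * a := le_trans (sq_nonneg _) hDge
    have hrw : ((u + s) / a) ^ 2 - 4 * s / a = ((u + s) ^ 2 - 4 * s * a) / a ^ 2 := by
      field_simp
    rw [hrw, Real.sqrt_div hDnn, Real.sqrt_sq haP.le]
    set r := Real.sqrt ((u + s) ^ 2 - 4 * s * a) with hr
    have hrnn : 0 ≤ r := Real.sqrt_nonneg _
    have hr2 : r ^ 2 = (u + s) ^ 2 - 4 * s * a := Real.sq_sqrt hDnn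
    have hd : 0 < u + s + r := by positivity
    rw [div_eq_div_iff (by positivity) hd.ne']
    field_simp
    nlinarith [hr2]
  · rw [if_neg (not_lt.2 h)]
    have hν : ν₀ = 1 := le_antisymm h1 (by linarith)
    subst hν
    simp only [sub_self, mul_zero, mul_zero, sub_zero]
    rw [Real.sqrt_sq (by positivity)]
    rw [div_eq_div_iff (by positivity) (by positivity)]
    ring

/-- Bounds on `pParam`: `0 < p ≤ 1`. -/
lemma pParam_bounds (u s ν₀ : ℝ) (hu : 0 < u) (hs : 0 < s) (h0 : 0 ≤ ν₀) (h1 : ν₀ ≤ 1) :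
    0 < pParam u s ν₀ ∧ pParam u s ν₀ ≤ 1 := by
  rw [pParam_eq u s ν₀ hu hs h0 h1]
  set D := (u + s) ^ 2 - 4 * s * (u * (1 - ν₀)) with hD
  have hDge : (u - s) ^ 2 ≤ D := by nlinarith [mul_nonneg (mul_nonneg hs.le hu.le) h0]
  have hDnn : 0 ≤ D := le_trans (sq_nonneg _) hDge
  have hrge : |u - s| ≤ Real.sqrt D := by
    rw [← Real.sqrt_sq_eq_abs]
    exact Real.sqrt_le_sqrt hDge
  have habs : u - s ≤ |u - s| := le_abs_self _
  have habs' : s - u ≤ |u - s| := by rw [abs_sub_comm]; exact le_abs_self _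
  have hd : 0 < u + s + Real.sqrt D := by positivity
  constructor
  · positivity
  · rw [div_le_one hd]
    linarith

/-- The asymptotic probability of an unfit representative ancestral type is strictly
increasing in the beneficial mutation probability `ν₀`. -/
theorem unfit_ancestral_probability_strict_mono
    (u s y₀ : ℝ) (hu : 0 < u) (hs : 0 < s) (hy₀ : y₀ ∈ Set.Ioo (0 : ℝ) 1) :
    ∀ ν₀ νbar₀ : ℝ, 0 ≤ ν₀ → ν₀ < νbar₀ → νbar₀ ≤ 1 →
      Gfun u s y₀ ν₀ < Gfun u s y₀ νbar₀ := by
  intro ν₀ νb h0 hlt h1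
  obtain ⟨hy0, hy1⟩ := hy₀
  have h0b : 0 ≤ νb := le_trans h0 hlt.le
  have h1a : ν₀ ≤ 1 := le_trans hlt.le h1
  -- pParam is strictly decreasing: p(νb) < p(ν₀)
  have hDge1 : (u - s) ^ 2 ≤ (u + s) ^ 2 - 4 * s * (u * (1 - ν₀)) := by nlinarith [mul_nonneg (mul_nonneg hs.le hu.le) h0]
  have hDnn1 : 0 ≤ (u + s) ^ 2 - 4 * s * (u * (1 - ν₀)) := le_trans (sq_nonneg _) hDge1
  have hDlt : (u + s) ^ 2 - 4 * s * (u * (1 - ν₀)) < (u + s) ^ 2 - 4 * s * (u * (1 - νb)) := by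
    nlinarith [mul_pos (mul_pos hs hu) (sub_pos.2 hlt)]
  have hsqrt : Real.sqrt ((u + s) ^ 2 - 4 * s * (u * (1 - ν₀)))
      < Real.sqrt ((u + s) ^ 2 - 4 * s * (u * (1 - νb))) :=
    Real.sqrt_lt_sqrt hDnn1 hDlt
  have hplt : pParam u s νb < pParam u s ν₀ := by
    rw [pParam_eq u s ν₀ hu hs h0 h1a, pParam_eq u s νb hu hs h0b h1]
    have hd1 : 0 < u + s + Real.sqrt ((u + s) ^ 2 - 4 * s * (u * (1 - ν₀))) := by positivity
    have hd2 : 0 < u + s + Real.sqrt ((u + s) ^ 2 - 4 * s * (u * (1 - νb))) := by positivity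
    apply div_lt_div_of_pos_left (by positivity) hd1
    linarith
  obtain ⟨hp1pos, hp1le⟩ := pParam_bounds u s ν₀ hu hs h0 h1a
  obtain ⟨hp2pos, hp2le⟩ := pParam_bounds u s νb hu hs h0b h1
  set p1 := pParam u s ν₀
  set p2 := pParam u s νb
  have hden1 : 0 < 1 - p1 * y₀ := by nlinarith
  have hden2 : 0 < 1 - p2 * y₀ := by nlinarith
  unfold Gfun
  rw [div_lt_div_iff₀ hden1 hden2]
  nlinarith [mul_pos (sub_pos.2 hplt) (sub_pos.2 hy1), hy0]
end
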